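/- arXiv:1812.05213 — 5 statements merged into one kernel-verified Lean document; each statement's English description precedes it below -/
import Mathlib

section
/- If K is a convex body in ℝⁿ (a compact convex set with nonempty interior) and σ(K) denotes its centroid, then -(K - σ(K)) ⊆ n(K - σ(K)). -/
/-!
Fix a continuous linear functional `f`, a point `x ∈ K` and the bound `f ≤ u` on `K`, and
translate so that `x = 0`. For `0 < s < 1` the body contains `s • K`, on which the integral
of `f` is `s ^ (d + 1) ∫_K f` and the volume `s ^ d |K|`; bounding `f` by `u` on the shell
`K \ s • K` gives `(1 - s ^ (d + 1)) ∫_K f ≤ u (1 - s ^ d) |K|`. Dividing by `1 - s` and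
letting `s → 1` yields `(d + 1) ∫_K f ≤ d u |K|`, i.e. `f σ - f x ≤ d / (d + 1) (u - f x)`.
By Hahn–Banach this says exactly that `σ + d⁻¹ • (σ - x) ∈ K`.
-/

open MeasureTheory Set Pointwise Module

lemma mul_add_one_le_mul_of_one_sub_pow_le {a b : ℝ} (d : ℕ)
    (h : ∀ s ∈ Ioo (0 : ℝ) 1, a * (1 - s ^ (d + 1)) ≤ b * (1 - s ^ d)) :
    a * (d + 1) ≤ b * d := by
  set p : ℝ → ℝ := fun s =>
    b * ∑ i ∈ Finset.range d, s ^ i - a * ∑ i ∈ Finset.range (d + 1), s ^ i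
  have hp : Ioo (0 : ℝ) 1 ⊆ {s | 0 ≤ p s} := by
    intro s hs
    have hfactor : p s * (1 - s) = b * (1 - s ^ d) - a * (1 - s ^ (d + 1)) := by
      simp only [p, sub_mul, mul_assoc, geom_sum_mul_neg]
    have := h s hs
    exact nonneg_of_mul_nonneg_left (by linarith) (sub_pos.2 hs.2)
  have hclosed : IsClosed {s | 0 ≤ p s} := isClosed_le continuous_const (by fun_prop)
  have h1 : (1 : ℝ) ∈ closure (Ioo 0 1) := by simp [closure_Ioo zero_ne_one]
  have := hclosed.closure_subset_iff.2 hp h1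
  simp only [p, mem_ofPred_eq, one_pow, Finset.sum_const, Finset.card_range, nsmul_eq_mul,
    mul_one] at this
  push_cast at this
  linarith

variable {E : Type*} [NormedAddCommGroup E] [NormedSpace ℝ E] [FiniteDimensional ℝ E]
  [MeasurableSpace E] [BorelSpace E] (μ : Measure E) [μ.IsAddHaarMeasure]

lemma setIntegral_smul_set_of_pos (f : E →L[ℝ] ℝ) (S : Set E) {s : ℝ} (hs : 0 < s) :
    ∫ z in s • S, f z ∂μ = s ^ (finrank ℝ E + 1) * ∫ z in S, f z ∂μ := by
  have h := μ.setIntegral_comp_smul_of_pos (fun z => f z) S hs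
  simp only [map_smul, smul_eq_mul, integral_const_mul] at h
  rw [pow_succ, mul_assoc, h, ← mul_assoc, mul_inv_cancel₀ (pow_pos hs _).ne', one_mul]

lemma setIntegral_mul_finrank_add_one_le_of_starConvex {S : Set E} (hS : IsCompact S)
    (hstar : StarConvex ℝ 0 S) (f : E →L[ℝ] ℝ) {U : ℝ} (hU : ∀ z ∈ S, f z ≤ U) :
    (∫ z in S, f z ∂μ) * (finrank ℝ E + 1) ≤ U * μ.real S * finrank ℝ E := by
  refine mul_add_one_le_mul_of_one_sub_pow_le _ fun s ⟨hs0, hs1⟩ => ?_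
  have hsub : s • S ⊆ S := by
    rintro _ ⟨z, hz, rfl⟩
    exact hstar.smul_mem hz hs0.le hs1.le
  have hmeas : MeasurableSet (s • S) := (hS.smul s).isClosed.measurableSet
  have hint : IntegrableOn f S μ := f.continuous.continuousOn.integrableOn_compact hS
  have hvol : μ.real (s • S) = s ^ finrank ℝ E * μ.real S := by
    simp [measureReal_def, μ.addHaar_smul_of_nonneg hs0.le, ENNReal.toReal_ofReal, hs0.le]
  have hshell : ∫ z in S \ s • S, f z ∂μ ≤ U * μ.real (S \ s • S) := by
    calc ∫ z in S \ s • S, f z ∂μ ≤ ∫ _ in S \ s • S, U ∂μ :=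
          setIntegral_mono_on (hint.mono_set sdiff_subset)
            (integrableOn_const ((measure_mono sdiff_subset).trans_lt hS.measure_lt_top).ne)
            (hS.isClosed.measurableSet.diff hmeas) fun z hz => hU z hz.1
      _ = U * μ.real (S \ s • S) := by rw [setIntegral_const, smul_eq_mul, mul_comm]
  rw [setIntegral_sdiff hmeas hint hsub, measureReal_sdiff hsub hmeas hS.measure_lt_top.ne,
    hvol, setIntegral_smul_set_of_pos μ f S hs0] at hshell
  linear_combination hshell

lemma setIntegral_sub_mul_finrank_add_one_le_of_starConvex {S : Set E} {x : E} (hS : IsCompact S)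
    (hstar : StarConvex ℝ x S) (f : E →L[ℝ] ℝ) {U : ℝ} (hU : ∀ z ∈ S, f z ≤ U) :
    (∫ z in S, f z ∂μ - μ.real S * f x) * (finrank ℝ E + 1) ≤
      (U - f x) * μ.real S * finrank ℝ E := by
  set S' := (fun z => x + z) ⁻¹' S
  have hstar' : StarConvex ℝ 0 S' := (add_zero x ▸ hstar).preimage_add_right
  have hS' : IsCompact S' := (Homeomorph.addLeft x).isCompact_preimage.2 hS
  have hU' : ∀ z ∈ S', f z ≤ U - f x := fun z hz => by
    have := hU _ hz
    rw [map_add] at this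
    linarith
  have hvol : μ.real S' = μ.real S := by
    simp only [measureReal_def, S', measure_preimage_add]
  have hint : ∫ z in S', f z ∂μ = ∫ z in S, f z ∂μ - μ.real S * f x := by
    have htrans := (measurePreserving_add_left μ x).setIntegral_preimage_emb
      (measurableEmbedding_addLeft x) (fun z => f z) S
    simp only [map_add] at htrans
    rw [integral_add (integrableOn_const (C := f x) hS'.measure_lt_top.ne)
      (f.continuous.continuousOn.integrableOn_compact hS'), setIntegral_const, hvol] at htrans
    rw [← htrans, smul_eq_mul]
    ring
  have := setIntegral_mul_finrank_add_one_le_of_starConvex μ hS' hstar' f hU'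
  rwa [hint, hvol] at this

lemma finrank_add_one_mul_apply_average_le {K : Set E} (hK : IsCompact K) (hconv : Convex ℝ K)
    (hμK : μ K ≠ 0) (f : E →L[ℝ] ℝ) {u : ℝ} (hu : ∀ z ∈ K, f z ≤ u) {x : E} (hx : x ∈ K) :
    (finrank ℝ E + 1) * f (⨍ z in K, z ∂μ) ≤ finrank ℝ E * u + f x := by
  have hV : 0 < μ.real K := ENNReal.toReal_pos hμK hK.measure_lt_top.ne
  have hf : f (⨍ z in K, z ∂μ) = (μ.real K)⁻¹ * ∫ z in K, f z ∂μ := by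
    rw [setAverage_eq, map_smul, smul_eq_mul,
      ← f.integral_comp_comm (φ := fun z => z) (continuous_id.continuousOn.integrableOn_compact hK)]
  have := setIntegral_sub_mul_finrank_add_one_le_of_starConvex μ hK (hconv.starConvex hx) f hu
  rw [hf, ← mul_le_mul_iff_of_pos_right hV]
  field_simp
  linear_combination this

lemma setAverage_add_inv_finrank_smul_sub_mem {K : Set E} (hK : IsCompact K) (hconv : Convex ℝ K)
    (hμK : μ K ≠ 0) (hd : finrank ℝ E ≠ 0) {x : E} (hx : x ∈ K) :
    ⨍ z in K, z ∂μ + (finrank ℝ E : ℝ)⁻¹ • (⨍ z in K, z ∂μ - x) ∈ K := by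
  by_contra hy
  obtain ⟨f, u, hfu, hfy⟩ := geometric_hahn_banach_closed_point hconv hK.isClosed hy
  have hkey := finrank_add_one_mul_apply_average_le μ hK hconv hμK f (fun z hz => (hfu z hz).le) hx
  have hd' : (0 : ℝ) < finrank ℝ E := by positivity
  rw [map_add, map_smul, map_sub, smul_eq_mul, ← sub_lt_iff_lt_add', lt_inv_mul_iff₀ hd'] at hfy
  linarith

theorem stmt_3 (n : ℕ) (hn : 1 ≤ n) (K : Set (EuclideanSpace ℝ (Fin n)))
    (hKcomp : IsCompact K) (hKconv : Convex ℝ K) (hKint : (interior K).Nonempty)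
    (σ : EuclideanSpace ℝ (Fin n))
    (hσ : σ = ((MeasureTheory.volume K).toReal)⁻¹ • ∫ x in K, x) :
    ∀ x ∈ K, ∃ y ∈ K, -(x - σ) = (n : ℝ) • (y - σ) := by
  intro x hx
  have hσ_average : σ = ⨍ z in K, z := by rw [hσ, setAverage_eq, measureReal_def]
  have hμK : volume K ≠ 0 := (Measure.measure_pos_of_nonempty_interior _ hKint).ne'
  have hfinrank : finrank ℝ (EuclideanSpace ℝ (Fin n)) = n := finrank_euclideanSpace_fin
  have hn' : (n : ℝ) ≠ 0 := by exact_mod_cast (by omega : n ≠ 0)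
  refine ⟨σ + (n : ℝ)⁻¹ • (σ - x), ?_, ?_⟩
  · have := setAverage_add_inv_finrank_smul_sub_mem volume hKcomp hKconv hμK (by omega) hx
    rwa [hfinrank, ← hσ_average] at this
  · rw [add_sub_cancel_left, smul_smul, mul_inv_cancel₀ hn', one_smul, neg_sub]
end

section
/- Let K be a convex body in ℝⁿ with centroid at the origin, let R = max_{x∈K} ‖x‖ and let v ∈ S^{n-1} be such that Rv ∈ K. Suppose r ≥ 1 and let Ξ₁ = {u ∈ S^{n-1} : h_K(u) < r}. Then Ξ₁ ⊆ {u ∈ S^{n-1} : |⟨u,v⟩| ≤ nr/R}. -/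
open MeasureTheory Set Metric
open scoped RealInnerProductSpace

/-- The support function of a set. -/
noncomputable def suppFn {n : ℕ} (K : Set (EuclideanSpace ℝ (Fin n)))
    (u : EuclideanSpace ℝ (Fin n)) : ℝ :=
  sSup ((fun x => ⟪x, u⟫) '' K)

/-!
Let `f` be a linear functional, `m` its minimum on `K`, attained at `x₀`, and `D` its
oscillation on `K`. The homothety of ratio `t / D` centred at `x₀` maps `K` into
`K ∩ {f ≤ m + t}`, so `{f > m + t}` fills at most a fraction `1 - (t / D) ^ d` of `K`, and the
layer-cake formula gives `∫_K (f - m) ≤ d / (d + 1) · D · |K|`. When the centroid of `K` is the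
origin the left side is `-m |K|`, so `-m ≤ d · max_K f`: this is `-(1/d) K ⊆ K` read through
support functions. With `f = ⟪u, ·⟫` at the point `R v` it bounds `±R ⟪u, v⟫` by `n h_K(u) < n r`.
-/

open Module

theorem intervalIntegral.integral_one_sub_div_pow {D : ℝ} (hD : D ≠ 0) (n : ℕ) :
    ∫ t in (0 : ℝ)..D, (1 - (t / D) ^ n) = D * n / (n + 1) := by
  rw [intervalIntegral.integral_sub intervalIntegrable_const
    ((by fun_prop : Continuous fun t : ℝ => (t / D) ^ n).intervalIntegrable _ _),
    intervalIntegral.integral_comp_div (fun t => t ^ n) hD, integral_pow]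
  simp only [intervalIntegral.integral_const, sub_zero, smul_eq_mul, mul_one, zero_div,
    div_self hD, one_pow, zero_pow (Nat.succ_ne_zero n)]
  field_simp
  ring

section

variable {E : Type*} [NormedAddCommGroup E] [NormedSpace ℝ E] [FiniteDimensional ℝ E]
  [MeasurableSpace E] [BorelSpace E] (μ : Measure E) [μ.IsAddHaarMeasure]
  {K : Set E} (f : E →L[ℝ] ℝ) {x₀ : E} {D : ℝ}

theorem Convex.pow_mul_measureReal_le_inter_sublevel (hKμ : μ K ≠ ⊤) (hK : Convex ℝ K)
    (hx₀ : x₀ ∈ K) (hD0 : 0 < D) (hD : ∀ y ∈ K, f y ≤ f x₀ + D) {t : ℝ} (ht : t ∈ Icc 0 D) :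
    (t / D) ^ finrank ℝ E * μ.real K ≤ μ.real (K ∩ {y | f y ≤ f x₀ + t}) := by
  have hc : t / D ∈ Icc (0 : ℝ) 1 := ⟨div_nonneg ht.1 hD0.le, div_le_one_of_le₀ ht.2 hD0.le⟩
  have himage : AffineMap.homothety x₀ (t / D) '' K ⊆ K ∩ {y | f y ≤ f x₀ + t} := by
    rintro _ ⟨y, hy, rfl⟩
    refine ⟨AffineMap.homothety_eq_lineMap x₀ (t / D) y ▸ hK.lineMap_mem hx₀ hy hc, ?_⟩
    have hfy : t / D * (f y - f x₀) ≤ t / D * D :=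
      mul_le_mul_of_nonneg_left (by linarith [hD y hy]) hc.1
    rw [div_mul_cancel₀ t hD0.ne'] at hfy
    simp only [mem_ofPred_eq, AffineMap.homothety_apply, vsub_eq_sub, vadd_eq_add, map_add,
      map_smul, map_sub, smul_eq_mul]
    linarith
  calc (t / D) ^ finrank ℝ E * μ.real K
      = μ.real (AffineMap.homothety x₀ (t / D) '' K) := by
        simp only [measureReal_def, Measure.addHaar_image_homothety,
          abs_of_nonneg (pow_nonneg hc.1 _), ENNReal.toReal_mul,
          ENNReal.toReal_ofReal (pow_nonneg hc.1 _)]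
    _ ≤ μ.real (K ∩ {y | f y ≤ f x₀ + t}) :=
        measureReal_mono himage (measure_ne_top_of_subset inter_subset_left hKμ)

theorem Convex.measureReal_superlevel_le (hKc : IsCompact K) (hK : Convex ℝ K)
    (hx₀ : x₀ ∈ K) (hD0 : 0 < D) (hD : ∀ y ∈ K, f y ≤ f x₀ + D) {t : ℝ} (ht : t ∈ Icc 0 D) :
    (μ.restrict K).real {y | t < f y - f x₀} ≤ μ.real K * (1 - (t / D) ^ finrank ℝ E) := by
  have hsub : {y | t < f y - f x₀} ∩ K = K \ (K ∩ {y | f y ≤ f x₀ + t}) := by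
    ext y
    simp only [mem_inter_iff, mem_ofPred_eq, mem_sdiff, not_and, not_le]
    constructor
    · rintro ⟨h, hy⟩; exact ⟨hy, fun _ => by linarith⟩
    · rintro ⟨hy, h⟩; exact ⟨by linarith [h hy], hy⟩
  have hmeas : MeasurableSet (K ∩ {y | f y ≤ f x₀ + t}) :=
    hKc.isClosed.measurableSet.inter (measurableSet_le (by fun_prop) (by fun_prop))
  rw [measureReal_restrict_apply' hKc.isClosed.measurableSet, hsub,
    measureReal_sdiff inter_subset_left hmeas hKc.measure_lt_top.ne]
  linarith [hK.pow_mul_measureReal_le_inter_sublevel μ f hKc.measure_lt_top.ne hx₀ hD0 hD ht]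

theorem Convex.setIntegral_sub_le_mul (hKc : IsCompact K) (hK : Convex ℝ K) (hx₀ : x₀ ∈ K)
    (hmin : ∀ y ∈ K, f x₀ ≤ f y) (hD0 : 0 ≤ D) (hD : ∀ y ∈ K, f y ≤ f x₀ + D) :
    ∫ y in K, (f y - f x₀) ∂μ ≤ D * finrank ℝ E / (finrank ℝ E + 1) * μ.real K := by
  have hKm : MeasurableSet K := hKc.isClosed.measurableSet
  rcases hD0.eq_or_lt with rfl | hD0
  · rw [zero_mul, zero_div, zero_mul]
    exact setIntegral_nonpos hKm fun y hy => by linarith [hD y hy]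
  set g : E → ℝ := fun y => f y - f x₀
  have hg : Integrable g (μ.restrict K) :=
    (by fun_prop : Continuous g).continuousOn.integrableOn_compact hKc
  have hg0 : 0 ≤ᵐ[μ.restrict K] g :=
    (ae_restrict_iff' hKm).2 (.of_forall fun y hy => sub_nonneg.2 (hmin y hy))
  have hgD : g ≤ᵐ[μ.restrict K] fun _ => D :=
    (ae_restrict_iff' hKm).2 (.of_forall fun y hy => sub_le_iff_le_add'.2 (hD y hy))
  have : IsFiniteMeasure (μ.restrict K) := isFiniteMeasure_restrict.2 hKc.measure_lt_top.ne
  have hanti : Antitone fun t => (μ.restrict K).real {y | t < g y} :=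
    fun s t hst => measureReal_mono fun y (hy : t < g y) => hst.trans_lt hy
  have htail : IntegrableOn (fun t => (μ.restrict K).real {y | t < g y}) (Ioc 0 D) :=
    (hanti.antitoneOn _).integrableOn_isCompact isCompact_Icc |>.mono_set Ioc_subset_Icc_self
  calc ∫ y in K, g y ∂μ = ∫ t in Ioc 0 D, (μ.restrict K).real {y | t ≤ g y} :=
        hg.integral_eq_integral_Ioc_meas_le hg0 hgD
    _ = ∫ t in Ioc 0 D, (μ.restrict K).real {y | t < g y} := by
        refine integral_congr_ae ?_
        filter_upwards [meas_le_ae_eq_meas_lt (μ.restrict K) (volume.restrict (Ioc 0 D)) g]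
          with t ht
        rw [measureReal_def, ht, measureReal_def]
    _ ≤ ∫ t in Ioc 0 D, μ.real K * (1 - (t / D) ^ finrank ℝ E) :=
        setIntegral_mono_on htail (by fun_prop : Continuous _).integrableOn_Ioc measurableSet_Ioc
          fun t ht => hK.measureReal_superlevel_le μ f hKc hx₀ hD0 hD (Ioc_subset_Icc_self ht)
    _ = D * finrank ℝ E / (finrank ℝ E + 1) * μ.real K := by
        rw [integral_const_mul, ← intervalIntegral.integral_of_le hD0.le,
          intervalIntegral.integral_one_sub_div_pow hD0.ne']
        ring

theorem neg_le_finrank_mul_of_setIntegral_id_eq_zero (hKc : IsCompact K) (hK : Convex ℝ K)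
    (hKint : (interior K).Nonempty) (hcent : ∫ x in K, x ∂μ = 0) {M : ℝ}
    (hM : ∀ y ∈ K, f y ≤ M) {y : E} (hy : y ∈ K) :
    -f y ≤ finrank ℝ E * M := by
  obtain ⟨x₀, hx₀, hmin⟩ := hKc.exists_isMinOn ⟨y, hy⟩ f.continuous.continuousOn
  have hvol : 0 < μ.real K := ENNReal.toReal_pos
    (μ.measure_pos_of_nonempty_interior hKint).ne' hKc.measure_lt_top.ne
  have hf : IntegrableOn f K μ := f.continuous.continuousOn.integrableOn_compact hKc
  have hmean : ∫ y in K, (f y - f x₀) ∂μ = -f x₀ * μ.real K := by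
    have hf0 : ∫ x in K, f x ∂μ = 0 := by
      rw [f.integral_comp_comm (φ := fun x => x) (continuousOn_id.integrableOn_compact hKc),
        hcent, map_zero]
    rw [integral_sub hf (integrableOn_const hKc.measure_lt_top.ne), hf0, setIntegral_const,
      smul_eq_mul]
    ring
  have hbound := hK.setIntegral_sub_le_mul μ f hKc hx₀ hmin (sub_nonneg.2 (hM x₀ hx₀))
    fun y hy => (add_sub_cancel (f x₀) M).symm ▸ hM y hy
  rw [hmean] at hbound
  have hx₀M : -f x₀ ≤ (M - f x₀) * finrank ℝ E / (finrank ℝ E + 1) :=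
    le_of_mul_le_mul_right hbound hvol
  rw [le_div_iff₀ (by positivity)] at hx₀M
  have hy' : f x₀ ≤ f y := hmin hy
  linarith

end

theorem inner_le_suppFn {n : ℕ} {K : Set (EuclideanSpace ℝ (Fin n))} (hK : IsCompact K)
    {x : EuclideanSpace ℝ (Fin n)} (hx : x ∈ K) (u : EuclideanSpace ℝ (Fin n)) :
    ⟪x, u⟫ ≤ suppFn K u :=
  le_csSup (hK.image (by fun_prop)).bddAbove (mem_image_of_mem _ hx)

theorem stmt_7_general (n : ℕ) (hn : 1 ≤ n) (K : Set (EuclideanSpace ℝ (Fin n)))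
    (hKcomp : IsCompact K) (hKconv : Convex ℝ K) (hKint : (interior K).Nonempty)
    (hcent : ((MeasureTheory.volume K).toReal)⁻¹ • (∫ x in K, x) = (0 : EuclideanSpace ℝ (Fin n)))
    (R : ℝ) (hR : 0 < R)
    (v : EuclideanSpace ℝ (Fin n)) (hRv : R • v ∈ K)
    (r : ℝ) (hr : 1 ≤ r) :
    ∀ u ∈ Metric.sphere (0 : EuclideanSpace ℝ (Fin n)) 1,
      suppFn K u < r → |⟪u, v⟫| ≤ (n : ℝ) * r / R := by
  intro u _ hsupp
  have hvol : (volume K).toReal ≠ 0 := ENNReal.toReal_ne_zero.2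
    ⟨(volume.measure_pos_of_nonempty_interior hKint).ne', hKcomp.measure_lt_top.ne⟩
  have hK0 : ∫ x in K, x = 0 := (smul_eq_zero.1 hcent).resolve_left (inv_ne_zero hvol)
  have hsuppFn (y : EuclideanSpace ℝ (Fin n)) (hy : y ∈ K) : innerSL ℝ u y ≤ suppFn K u := by
    simpa only [innerSL_apply_apply, real_inner_comm] using inner_le_suppFn hKcomp hy u
  have hlower := neg_le_finrank_mul_of_setIntegral_id_eq_zero volume (innerSL ℝ u) hKcomp hKconv
    hKint hK0 hsuppFn hRv
  have hupper := hsuppFn _ hRv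
  rw [finrank_euclideanSpace_fin] at hlower
  simp only [innerSL_apply_apply, inner_smul_right] at hlower hupper
  have hnr : n * suppFn K u ≤ n * r := by gcongr
  have hrnr : r ≤ n * r := le_mul_of_one_le_left (by linarith) (by exact_mod_cast hn)
  rw [abs_le, ← neg_div, div_le_iff₀ hR, le_div_iff₀ hR]
  constructor <;> linarith

theorem stmt_7 (n : ℕ) (hn : 1 ≤ n) (K : Set (EuclideanSpace ℝ (Fin n)))
    (hKcomp : IsCompact K) (hKconv : Convex ℝ K) (hKint : (interior K).Nonempty)
    (hcent : ((MeasureTheory.volume K).toReal)⁻¹ • (∫ x in K, x) = (0 : EuclideanSpace ℝ (Fin n)))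
    (R : ℝ) (hR : 0 < R) (hRmax : ∀ x ∈ K, ‖x‖ ≤ R)
    (v : EuclideanSpace ℝ (Fin n)) (hv : ‖v‖ = 1) (hRv : R • v ∈ K)
    (r : ℝ) (hr : 1 ≤ r) :
    ∀ u ∈ Metric.sphere (0 : EuclideanSpace ℝ (Fin n)) 1,
      suppFn K u < r → |⟪u, v⟫| ≤ (n : ℝ) * r / R :=
  stmt_7_general n hn K hKcomp hKconv hKint hcent R hR v hRv r hr
end

section
/- Let Ψ : (0,∞) → (0,∞) be strictly convex, let f : S^{n-1} → (0,∞) be measurable with f > τ₁ for some τ₁ > 0, and let K be a convex body in ℝⁿ. Then the function Φ(ξ) = ∫_{S^{n-1}} Ψ(h_K(u) - ⟨ξ,u⟩) f(u) dH^{n-1}(u) is strictly convex on the interior of K. -/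
open MeasureTheory Set Metric
open scoped RealInnerProductSpace

/-!
For every unit vector `u`, `ξ ↦ Ψ (h_K u - ⟪ξ, u⟫)` is convex on `int K`, since `h_K u - ⟪ξ, u⟫`
is a positive affine function of `ξ` there, and it is strictly convex along any segment `[ξ₁, ξ₂]`
with `⟪ξ₁ - ξ₂, u⟫ ≠ 0`. Hence the convexity gap of `Φ` is the integral of a nonnegative function
that is positive off the great sphere orthogonal to `ξ₁ - ξ₂`, and the rest of the sphere has
positive `(n - 1)`-dimensional Hausdorff measure because its orthogonal projection onto that
hyperplane covers an open `(n - 1)`-ball.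
-/

open Module

section Integral

variable {α E : Type*} [MeasurableSpace α] {μ : Measure α} [AddCommGroup E] [Module ℝ E]
  {s : Set E} {F : E → α → ℝ}

theorem strictConvexOn_integral (hs : Convex ℝ s) (hF : ∀ x ∈ s, Integrable (F x) μ)
    (hconv : ∀ᵐ u ∂μ, ConvexOn ℝ s (F · u))
    (hstrict : ∀ x ∈ s, ∀ y ∈ s, x ≠ y → ∀ a b : ℝ, 0 < a → 0 < b → a + b = 1 →
      0 < μ {u | F (a • x + b • y) u < a * F x u + b * F y u}) :
    StrictConvexOn ℝ s (fun x => ∫ u, F x u ∂μ) := by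
  refine ⟨hs, fun x hx y hy hxy a b ha hb hab => ?_⟩
  set gap : α → ℝ := fun u => a * F x u + b * F y u - F (a • x + b • y) u
  have hxa : Integrable (fun u => a * F x u) μ := (hF x hx).const_mul a
  have hyb : Integrable (fun u => b * F y u) μ := (hF y hy).const_mul b
  have hsum : Integrable (fun u => a * F x u + b * F y u) μ := hxa.add hyb
  have hcombo : Integrable (F (a • x + b • y)) μ := hF _ (hs hx hy ha.le hb.le hab)
  have hgap_nonneg : 0 ≤ᵐ[μ] gap := hconv.mono fun u hu =>
    sub_nonneg.2 (hu.2 hx hy ha.le hb.le hab)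
  have hgap_pos : 0 < ∫ u, gap u ∂μ := by
    rw [integral_pos_iff_support_of_nonneg_ae hgap_nonneg (hsum.sub hcombo)]
    exact (hstrict x hx y hy hxy a b ha hb hab).trans_le
      (measure_mono fun u hu => (sub_pos.2 hu).ne')
  have hgap_eq : ∫ u, gap u ∂μ
      = a * ∫ u, F x u ∂μ + b * ∫ u, F y u ∂μ - ∫ u, F (a • x + b • y) u ∂μ := by
    rw [integral_sub hsum hcombo, integral_add hxa hyb, integral_const_mul, integral_const_mul]
  simp only [smul_eq_mul]
  linarith

end Integral

section InnerProductSpace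

variable {E : Type*} [NormedAddCommGroup E] [InnerProductSpace ℝ E]

section Affine

variable {Ψ : ℝ → ℝ} {c w a b : ℝ} {u x y : E}

private lemma sub_inner_add_smul (hab : a + b = 1) :
    c - ⟪a • x + b • y, u⟫ = a * (c - ⟪x, u⟫) + b * (c - ⟪y, u⟫) := by
  rw [inner_add_left, real_inner_smul_left, real_inner_smul_left]
  linear_combination c * hab.symm

theorem convexOn_comp_sub_inner_mul (hΨ : ConvexOn ℝ (Ioi 0) Ψ) (hw : 0 ≤ w) :
    ConvexOn ℝ {ξ | ⟪ξ, u⟫ < c} (fun ξ => Ψ (c - ⟪ξ, u⟫) * w) := by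
  refine ⟨convex_halfSpace_lt ((innerₗ E).flip u).isLinear c,
    fun x hx y hy a b ha hb hab => ?_⟩
  have h := hΨ.2 (mem_Ioi.2 (sub_pos.2 hx)) (mem_Ioi.2 (sub_pos.2 hy)) ha hb hab
  simp only [smul_eq_mul] at h ⊢
  rw [sub_inner_add_smul hab]
  nlinarith

theorem comp_sub_inner_mul_lt (hΨ : StrictConvexOn ℝ (Ioi 0) Ψ) (hw : 0 < w)
    (hx : ⟪x, u⟫ < c) (hy : ⟪y, u⟫ < c) (hxy : ⟪x - y, u⟫ ≠ 0)
    (ha : 0 < a) (hb : 0 < b) (hab : a + b = 1) :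
    Ψ (c - ⟪a • x + b • y, u⟫) * w < a * (Ψ (c - ⟪x, u⟫) * w) + b * (Ψ (c - ⟪y, u⟫) * w) := by
  have hne : c - ⟪x, u⟫ ≠ c - ⟪y, u⟫ := fun h => hxy (by rw [inner_sub_left]; linarith)
  have h := hΨ.2 (mem_Ioi.2 (sub_pos.2 hx)) (mem_Ioi.2 (sub_pos.2 hy)) hne ha hb hab
  simp only [smul_eq_mul] at h
  rw [sub_inner_add_smul hab]
  nlinarith

end Affine

theorem ball_subset_orthogonalProjection_image_sphere_diff {v : E} (hv : v ≠ 0) (r : ℝ) :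
    ball (0 : (ℝ ∙ v)ᗮ) r ⊆
      (ℝ ∙ v)ᗮ.orthogonalProjectionOnto '' (sphere (0 : E) r \ (ℝ ∙ v)ᗮ) := by
  intro w hw
  have hw' : ‖(w : E)‖ < r := mem_ball_zero_iff.1 hw
  set t := √(r ^ 2 - ‖(w : E)‖ ^ 2) / ‖v‖
  have ht : 0 < t :=
    div_pos (Real.sqrt_pos.2 (by nlinarith [norm_nonneg (w : E)])) (norm_pos_iff.2 hv)
  have hwv : ⟪(w : E), v⟫ = 0 := by
    rw [real_inner_comm]; exact Submodule.mem_orthogonal_singleton_iff_inner_right.1 w.2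
  refine ⟨w + t • v, ⟨?_, ?_⟩, ?_⟩
  · have hr : 0 ≤ r := (norm_nonneg _).trans hw'.le
    have htv : t * ‖v‖ = √(r ^ 2 - ‖(w : E)‖ ^ 2) := div_mul_cancel₀ _ (norm_ne_zero_iff.2 hv)
    rw [mem_sphere_zero_iff_norm, ← sq_eq_sq₀ (norm_nonneg _) hr, norm_add_sq_real,
      real_inner_smul_right, hwv, norm_smul, Real.norm_of_nonneg ht.le, htv,
      Real.sq_sqrt (by nlinarith [norm_nonneg (w : E)])]
    ring
  · rw [SetLike.mem_coe, Submodule.mem_orthogonal_singleton_iff_inner_right, inner_add_right,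
      real_inner_comm, hwv, real_inner_smul_right, real_inner_self_eq_norm_sq]
    have := norm_pos_iff.2 hv
    positivity
  · rw [map_add, Submodule.orthogonalProjectionOnto_mem_subspace_eq_self, map_smul,
      Submodule.orthogonalProjectionOnto_orthogonalComplement_singleton_eq_zero, smul_zero,
      add_zero]

theorem hausdorffMeasure_sphere_diff_orthogonal_pos [FiniteDimensional ℝ E] [MeasurableSpace E]
    [BorelSpace E] {v : E} (hv : v ≠ 0) {r : ℝ} (hr : 0 < r) :
    0 < μH[(finrank ℝ E : ℝ) - 1] (sphere (0 : E) r \ (ℝ ∙ v)ᗮ) := by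
  set W := (ℝ ∙ v)ᗮ
  have hdim : (finrank ℝ W : ℝ) = finrank ℝ E - 1 := by
    have h := (ℝ ∙ v).finrank_add_finrank_orthogonal
    rw [finrank_span_singleton hv] at h
    rw [← h]
    push_cast
    ring
  have hball : 0 < μH[(finrank ℝ E : ℝ) - 1] (ball (0 : W) r) := by
    rw [← hdim]; exact measure_ball_pos _ _ hr
  refine pos_iff_ne_zero.2 fun h0 => hball.ne' (le_antisymm ?_ zero_le)
  calc μH[(finrank ℝ E : ℝ) - 1] (ball (0 : W) r)
      ≤ μH[(finrank ℝ E : ℝ) - 1] (W.orthogonalProjectionOnto '' (sphere (0 : E) r \ W)) :=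
        measure_mono (ball_subset_orthogonalProjection_image_sphere_diff hv r)
    _ ≤ _ := W.orthogonalProjectionOnto.lipschitz.hausdorffMeasure_image_le
        (by rw [← hdim]; positivity) _
    _ = 0 := by rw [h0, mul_zero]

end InnerProductSpace

theorem inner_lt_suppFn_of_mem_interior {n : ℕ} {K : Set (EuclideanSpace ℝ (Fin n))}
    {ξ u : EuclideanSpace ℝ (Fin n)} (hK : BddAbove ((fun x => ⟪x, u⟫) '' K))
    (hξ : ξ ∈ interior K) (hu : u ≠ 0) : ⟪ξ, u⟫ < suppFn K u := by
  obtain ⟨ε, hε, hball⟩ := Metric.mem_nhds_iff.1 (mem_interior_iff_mem_nhds.1 hξ)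
  have hu' : 0 < ‖u‖ := norm_pos_iff.2 hu
  have hmem : ξ + (ε / 2 / ‖u‖) • u ∈ K := by
    apply hball
    rw [mem_ball_iff_norm, add_sub_cancel_left, norm_smul, Real.norm_of_nonneg (by positivity),
      div_mul_cancel₀ _ hu'.ne']
    linarith
  have hle : ⟪ξ + (ε / 2 / ‖u‖) • u, u⟫ ≤ suppFn K u := le_csSup hK ⟨_, hmem, rfl⟩
  rw [inner_add_left, real_inner_smul_left, real_inner_self_eq_norm_sq] at hle
  have : 0 < ε / 2 / ‖u‖ * ‖u‖ ^ 2 := by positivity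
  linarith

theorem stmt_10_general (n : ℕ) (Ψ : ℝ → ℝ)
    (hΨ : StrictConvexOn ℝ (Set.Ioi 0) Ψ)
    (τ₁ : ℝ) (hτ₁ : 0 < τ₁) (f : EuclideanSpace ℝ (Fin n) → ℝ)
    (hf : ∀ u ∈ Metric.sphere (0 : EuclideanSpace ℝ (Fin n)) 1, τ₁ < f u)
    (K : Set (EuclideanSpace ℝ (Fin n)))
    (hKcomp : IsCompact K) (hKconv : Convex ℝ K)
    (hint : ∀ ξ ∈ interior K,
      MeasureTheory.IntegrableOn (fun u => Ψ (suppFn K u - ⟪ξ, u⟫) * f u)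
        (Metric.sphere (0 : EuclideanSpace ℝ (Fin n)) 1) μH[(n:ℝ)-1]) :
    StrictConvexOn ℝ (interior K)
      (fun ξ => ∫ u in Metric.sphere (0 : EuclideanSpace ℝ (Fin n)) 1,
        Ψ (suppFn K u - ⟪ξ, u⟫) * f u ∂μH[(n:ℝ)-1]) := by
  set S := sphere (0 : EuclideanSpace ℝ (Fin n)) 1
  have hf_pos : ∀ u ∈ S, 0 < f u := fun u hu => hτ₁.trans (hf u hu)
  have h_lt : ∀ u ∈ S, interior K ⊆ {ξ | ⟪ξ, u⟫ < suppFn K u} := fun u hu ξ hξ =>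
    inner_lt_suppFn_of_mem_interior (hKcomp.image (by fun_prop)).bddAbove hξ
      (ne_zero_of_mem_unit_sphere ⟨u, hu⟩)
  refine strictConvexOn_integral hKconv.interior hint
    (ae_restrict_of_forall_mem isClosed_sphere.measurableSet fun u hu =>
      (convexOn_comp_sub_inner_mul hΨ.convexOn (hf_pos u hu).le).subset (h_lt u hu)
        hKconv.interior) ?_
  intro x hx y hy hxy a b ha hb hab
  calc 0 < μH[(n:ℝ)-1] (S \ (ℝ ∙ (x - y))ᗮ) := by
        simpa using hausdorffMeasure_sphere_diff_orthogonal_pos (sub_ne_zero.2 hxy) one_pos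
    _ ≤ _ := by
      rw [Measure.restrict_apply' isClosed_sphere.measurableSet]
      exact measure_mono fun u ⟨hu, hperp⟩ => ⟨comp_sub_inner_mul_lt hΨ (hf_pos u hu)
        (h_lt u hu hx) (h_lt u hu hy)
        (mt Submodule.mem_orthogonal_singleton_iff_inner_right.2 hperp) ha hb hab, hu⟩

theorem stmt_10 (n : ℕ) (hn : 1 ≤ n) (Ψ : ℝ → ℝ)
    (hΨ : StrictConvexOn ℝ (Set.Ioi 0) Ψ)
    (τ₁ : ℝ) (hτ₁ : 0 < τ₁) (f : EuclideanSpace ℝ (Fin n) → ℝ)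
    (hfm : Measurable f)
    (hf : ∀ u ∈ Metric.sphere (0 : EuclideanSpace ℝ (Fin n)) 1, τ₁ < f u)
    (K : Set (EuclideanSpace ℝ (Fin n)))
    (hKcomp : IsCompact K) (hKconv : Convex ℝ K) (hKint : (interior K).Nonempty)
    (hint : ∀ ξ ∈ interior K,
      MeasureTheory.IntegrableOn (fun u => Ψ (suppFn K u - ⟪ξ, u⟫) * f u)
        (Metric.sphere (0 : EuclideanSpace ℝ (Fin n)) 1) μH[(n:ℝ)-1]) :
    StrictConvexOn ℝ (interior K)
      (fun ξ => ∫ u in Metric.sphere (0 : EuclideanSpace ℝ (Fin n)) 1,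
        Ψ (suppFn K u - ⟪ξ, u⟫) * f u ∂μH[(n:ℝ)-1]) :=
  stmt_10_general n Ψ hΨ τ₁ hτ₁ f hf K hKcomp hKconv hint
end

section
/- Let K be a convex body in ℝⁿ with r B^n ⊆ int K for some r > 0, let ω ⊆ S^{n-1} be closed, and for t ∈ [0, r) define K(t) = {x ∈ K : ⟨x,u⟩ ≤ h_K(u) - t for all u ∈ ω}. If S_K(ω) = 0 (the surface area measure of K assigns measure zero to ω), then lim_{t→0⁺} (V(K(t)) - V(K))/t = 0. -/
/-!
Let `C t` be the cone from the origin over `K \ K(t)`. Since `h_K ≥ r` on `ω`, the dilate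
`(1 - t/r) • C t` lies in `C t` and misses `K \ K(t)`, so by Bernoulli's inequality
`V(K) - V(K(t)) ≤ (1 - (1 - t/r)^n) V(C t) ≤ (n t / r) V(C t)`. As `t → 0⁺` the cones decrease,
by compactness of `ω`, into the cone over the boundary points of `K` with an exterior normal in
`ω`. A cone over a bounded `H^{n-1}`-null set is Lebesgue-null: a cover of the base by sets of
diameter `dᵢ` turns into a cover of the cone by tubes of volume `O(dᵢ^{n-1})`. Hence `V(C t) → 0`.
-/

open MeasureTheory Set Metric Filter
open scoped RealInnerProductSpace Topology

open Module
open scoped ENNReal Pointwise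

section AddHaar

variable {E : Type*} [NormedAddCommGroup E] [NormedSpace ℝ E] [FiniteDimensional ℝ E]
  [MeasurableSpace E] [BorelSpace E] (μ : Measure E) [μ.IsAddHaarMeasure]

theorem addHaar_real_le_one_sub_pow_mul {M C : Set E} {c : ℝ} (hc : 0 ≤ c)
    (hM : MeasurableSet M) (hMC : M ⊆ C) (hcC : c • C ⊆ C) (hdisj : Disjoint M (c • C))
    (hC : μ C ≠ ∞) : μ.real M ≤ (1 - c ^ finrank ℝ E) * μ.real C := by
  have hsmul : μ.real (c • C) = c ^ finrank ℝ E * μ.real C := by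
    simp only [measureReal_def, Measure.addHaar_smul_of_nonneg μ hc, ENNReal.toReal_mul,
      ENNReal.toReal_ofReal (pow_nonneg hc _)]
  have hsplit := measureReal_inter_add_sdiff (μ := μ) (s := C) hM hC
  rw [inter_eq_right.mpr hMC] at hsplit
  have : μ.real (c • C) ≤ μ.real (C \ M) :=
    measureReal_mono (subset_sdiff.mpr ⟨hcC, hdisj.symm⟩) (measure_ne_top_of_subset sdiff_subset hC)
  linarith

theorem exists_nat_abs_sub_div_le {s : ℝ} (hs : s ∈ Icc (0 : ℝ) 1) {N : ℕ} (hN : 0 < N) :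
    ∃ j ∈ Finset.range (N + 1), |s - j / N| ≤ 1 / N := by
  have hN' : (0 : ℝ) < N := by exact_mod_cast hN
  have hsN : 0 ≤ s * N := mul_nonneg hs.1 hN'.le
  refine ⟨⌊s * N⌋₊, ?_, ?_⟩
  · rw [Finset.mem_range, Nat.lt_succ_iff, ← Nat.cast_le (α := ℝ)]
    exact (Nat.floor_le hsN).trans (by nlinarith [hs.2])
  · rw [show s - ⌊s * N⌋₊ / N = (s * N - ⌊s * N⌋₊) / N by field_simp, abs_div, abs_of_pos hN']
    gcongr
    rw [abs_le]
    constructor <;> linarith [Nat.floor_le hsN, Nat.lt_floor_add_one (s * N)]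

theorem addHaar_iUnion_closedBall_smul_le (hE : 2 ≤ finrank ℝ E) (c : E) {d : ℝ} (hd : 0 ≤ d) :
    μ (⋃ s ∈ Icc (0 : ℝ) 1, closedBall (s • c) d) ≤
      ENNReal.ofReal (2 ^ finrank ℝ E * (‖c‖ + 3 * d) * d ^ (finrank ℝ E - 1)) *
        μ (closedBall 0 1) := by
  set n := finrank ℝ E
  rcases hd.eq_or_lt with rfl | hd
  · -- a segment lies in a line, which is null in dimension at least two
    have hline : (Submodule.span ℝ {c} : Submodule ℝ E) ≠ ⊤ := by
      intro htop
      have : finrank ℝ (Submodule.span ℝ {c}) ≤ 1 := (finrank_span_le_card _).trans (by simp)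
      rw [htop, finrank_top] at this
      omega
    refine le_of_eq_of_le (measure_mono_null ?_ (Measure.addHaar_submodule μ _ hline)) zero_le
    simp only [closedBall_zero, iUnion_subset_iff, singleton_subset_iff]
    exact fun s _ => Submodule.smul_mem _ s (Submodule.mem_span_singleton_self c)
  · set N := ⌈‖c‖ / d⌉₊ + 1
    have hN : (0 : ℝ) < N := by positivity
    have hcN : ‖c‖ / N ≤ d := by
      rw [div_le_iff₀ hN, ← div_le_iff₀' hd]
      exact (Nat.le_ceil _).trans (by simp [N])
    have hcover : (⋃ s ∈ Icc (0 : ℝ) 1, closedBall (s • c) d) ⊆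
        ⋃ j ∈ Finset.range (N + 1), closedBall (((j : ℝ) / N) • c) (2 * d) := by
      simp only [iUnion_subset_iff]
      intro s hs x hx
      obtain ⟨j, hj, hsj⟩ := exists_nat_abs_sub_div_le hs (Nat.succ_pos _)
      refine mem_biUnion hj (mem_closedBall.mpr ?_)
      have : dist (s • c) (((j : ℝ) / N) • c) ≤ d := by
        rw [dist_eq_norm, ← sub_smul, norm_smul, Real.norm_eq_abs]
        calc |s - j / N| * ‖c‖ ≤ 1 / N * ‖c‖ := by gcongr
          _ ≤ d := by rwa [one_div_mul_eq_div]
      linarith [dist_triangle x (s • c) (((j : ℝ) / N) • c), mem_closedBall.mp hx]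
    have hcount : ((N : ℝ) + 1) * (2 * d) ^ n ≤ 2 ^ n * (‖c‖ + 3 * d) * d ^ (n - 1) := by
      have hNd : ((N : ℝ) + 1) * d ≤ ‖c‖ + 3 * d := by
        have := Nat.ceil_lt_add_one (div_nonneg (norm_nonneg c) hd.le)
        have : (N : ℝ) ≤ ‖c‖ / d + 2 := by simp only [N]; push_cast; linarith
        have : ‖c‖ / d * d = ‖c‖ := div_mul_cancel₀ _ hd.ne'
        nlinarith
      calc ((N : ℝ) + 1) * (2 * d) ^ n = 2 ^ n * (((N : ℝ) + 1) * d) * d ^ (n - 1) := by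
            rw [mul_pow, ← Nat.sub_add_cancel (by omega : 1 ≤ n), pow_succ' d, Nat.add_sub_cancel]
            ring
        _ ≤ 2 ^ n * (‖c‖ + 3 * d) * d ^ (n - 1) := by gcongr
    calc μ (⋃ s ∈ Icc (0 : ℝ) 1, closedBall (s • c) d)
        ≤ ∑ j ∈ Finset.range (N + 1), μ (closedBall (((j : ℝ) / N) • c) (2 * d)) :=
          (measure_mono hcover).trans (measure_biUnion_finset_le _ _)
      _ = ENNReal.ofReal (((N : ℝ) + 1) * (2 * d) ^ n) * μ (closedBall 0 1) := by
          simp only [Measure.addHaar_closedBall' μ _ (by positivity : (0 : ℝ) ≤ 2 * d),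
            Finset.sum_const, Finset.card_range, nsmul_eq_mul]
          rw [ENNReal.ofReal_mul (by positivity), ← mul_assoc]
          norm_cast
      _ ≤ _ := by gcongr

theorem addHaar_cone_le_of_subset_closedBall (hE : 2 ≤ finrank ℝ E) {B : Set E} {R : ℝ}
    (hB : B ⊆ closedBall 0 R) :
    μ (⋃ s ∈ Icc (0 : ℝ) 1, s • B) ≤
      ENNReal.ofReal (7 * 2 ^ finrank ℝ E * R) * μ (closedBall 0 1) *
        ediam B ^ (finrank ℝ E - 1) := by
  rcases B.eq_empty_or_nonempty with rfl | ⟨c, hc⟩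
  · simp
  have hcR : ‖c‖ ≤ R := by simpa using hB hc
  have hR : 0 ≤ R := (norm_nonneg c).trans hcR
  have hbdd : Bornology.IsBounded B := isBounded_closedBall.subset hB
  have hd : 0 ≤ diam B := diam_nonneg
  have hdR : diam B ≤ 2 * R := diam_le_of_subset_closedBall hR hB
  have hcone : (⋃ s ∈ Icc (0 : ℝ) 1, s • B) ⊆ ⋃ s ∈ Icc (0 : ℝ) 1, closedBall (s • c) (diam B) := by
    refine iUnion₂_mono fun s hs => ?_
    rintro _ ⟨b, hb, rfl⟩
    rw [mem_closedBall, dist_smul₀, Real.norm_eq_abs, abs_of_nonneg hs.1]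
    exact (mul_le_of_le_one_left dist_nonneg hs.2).trans (dist_le_diam_of_mem hbdd hb hc)
  refine (measure_mono hcone).trans ((addHaar_iUnion_closedBall_smul_le μ hE c hd).trans ?_)
  rw [← ENNReal.ofReal_toReal hbdd.ediam_ne_top, ← diam, ← ENNReal.ofReal_pow hd,
    mul_right_comm (ENNReal.ofReal _) (μ _), ← ENNReal.ofReal_mul (by positivity)]
  gcongr ENNReal.ofReal ?_ * _
  calc 2 ^ finrank ℝ E * (‖c‖ + 3 * diam B) * diam B ^ (finrank ℝ E - 1)
      ≤ 2 ^ finrank ℝ E * (7 * R) * diam B ^ (finrank ℝ E - 1) := by gcongr; linarith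
    _ = _ := by ring

theorem addHaar_cone_eq_zero {A : Set E} (hA : Bornology.IsBounded A)
    (h : μH[finrank ℝ E - 1] A = 0) : μ (⋃ s ∈ Icc (0 : ℝ) 1, s • A) = 0 := by
  rcases le_or_gt (finrank ℝ E) 1 with hE | hE
  · -- in dimension at most one, `μH[finrank ℝ E - 1]` dominates the counting measure `μH[0]`
    obtain rfl : A = ∅ := by
      by_contra hne
      have h0 := Measure.one_le_hausdorffMeasure_zero_of_nonempty (nonempty_iff_ne_empty.mpr hne)
      have hE' : (finrank ℝ E : ℝ) ≤ 1 := by exact_mod_cast hE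
      have hmono := Measure.hausdorffMeasure_mono (show (finrank ℝ E : ℝ) - 1 ≤ 0 by linarith) A
      rw [h] at hmono
      exact absurd (h0.trans hmono) (by simp)
    simp
  obtain ⟨R, hAR⟩ := hA.subset_closedBall 0
  set C := ENNReal.ofReal (7 * 2 ^ finrank ℝ E * R) * μ (closedBall 0 1)
  have hC : C ≠ ∞ := ENNReal.mul_ne_top ENNReal.ofReal_ne_top measure_closedBall_lt_top.ne
  have hcover : ∀ t : ℕ → Set E, A ⊆ ⋃ m, t m →
      μ (⋃ s ∈ Icc (0 : ℝ) 1, s • A) ≤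
        C * ∑' m, ⨆ _ : (t m).Nonempty, ediam (t m) ^ ((finrank ℝ E : ℝ) - 1) := by
    intro t ht
    have hsub : (⋃ s ∈ Icc (0 : ℝ) 1, s • A) ⊆ ⋃ m, ⋃ s ∈ Icc (0 : ℝ) 1, s • (t m ∩ A) := by
      simp only [iUnion_subset_iff]
      rintro s hs _ ⟨a, ha, rfl⟩
      obtain ⟨m, hm⟩ := mem_iUnion.mp (ht ha)
      exact mem_iUnion.mpr ⟨m, mem_biUnion hs (smul_mem_smul_set ⟨hm, ha⟩)⟩
    rw [← ENNReal.tsum_mul_left]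
    refine (measure_mono hsub).trans
      ((measure_iUnion_le _).trans (ENNReal.tsum_le_tsum fun m => ?_))
    rcases (t m).eq_empty_or_nonempty with hm | hm
    · simp [hm]
    have hexp : (finrank ℝ E : ℝ) - 1 = ((finrank ℝ E - 1 : ℕ) : ℝ) := by
      rw [Nat.cast_sub hE.le, Nat.cast_one]
    rw [iSup_pos hm, hexp, ENNReal.rpow_natCast]
    calc _ ≤ C * ediam (t m ∩ A) ^ (finrank ℝ E - 1) :=
          addHaar_cone_le_of_subset_closedBall μ hE (inter_subset_right.trans hAR)
      _ ≤ C * ediam (t m) ^ (finrank ℝ E - 1) := by gcongr; exact inter_subset_left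
  have hle : μ (⋃ s ∈ Icc (0 : ℝ) 1, s • A) / C ≤ μH[finrank ℝ E - 1] A := by
    rw [Measure.hausdorffMeasure_apply]
    exact le_iSup₂_of_le (1 : ℝ≥0∞) one_pos
      (le_iInf₂ fun t ht => le_iInf fun _ => ENNReal.div_le_of_le_mul' (hcover t ht))
  rw [h, nonpos_iff_eq_zero, ENNReal.div_eq_zero_iff] at hle
  exact hle.resolve_right hC

end AddHaar

section ConvexBody

variable {n : ℕ} {K ω : Set (EuclideanSpace ℝ (Fin n))}

theorem le_suppFn (hK : IsCompact K) {x : EuclideanSpace ℝ (Fin n)} (hx : x ∈ K)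
    (u : EuclideanSpace ℝ (Fin n)) : ⟪x, u⟫ ≤ suppFn K u :=
  le_csSup (hK.image (continuous_id.inner continuous_const)).bddAbove ⟨x, hx, rfl⟩

theorem continuous_suppFn (hK : IsCompact K) : Continuous (suppFn K) :=
  hK.continuous_sSup (f := fun u x => ⟪x, u⟫) (continuous_inner.comp continuous_swap)

theorem le_suppFn_of_closedBall_subset (hK : IsCompact K) {r : ℝ} (hr : 0 ≤ r)
    (hball : closedBall 0 r ⊆ K) {u : EuclideanSpace ℝ (Fin n)} (hu : ‖u‖ = 1) :
    r ≤ suppFn K u := by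
  have hru : r • u ∈ closedBall 0 r := by simp [norm_smul, hu, abs_of_nonneg hr]
  simpa [real_inner_smul_left, real_inner_self_eq_norm_sq, hu] using le_suppFn hK (hball hru) u

/-- The body `K(t)` of the paper. -/
def truncatedBody (K ω : Set (EuclideanSpace ℝ (Fin n))) (t : ℝ) :
    Set (EuclideanSpace ℝ (Fin n)) :=
  {x ∈ K | ∀ u ∈ ω, ⟪x, u⟫ ≤ suppFn K u - t}

/-- Away from the origin, the cone `⋃ s ∈ Ioc 0 1, s • (K \ truncatedBody K ω t)`; writing it
with the gauge of `K` makes it relatively open in `K`. -/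
def shellCone (K ω : Set (EuclideanSpace ℝ (Fin n))) (t : ℝ) : Set (EuclideanSpace ℝ (Fin n)) :=
  {x ∈ K | ∃ u ∈ ω, gauge K x * (suppFn K u - t) < ⟪x, u⟫}

theorem truncatedBody_subset (t : ℝ) : truncatedBody K ω t ⊆ K :=
  sep_subset _ _

theorem shellCone_subset (t : ℝ) : shellCone K ω t ⊆ K :=
  sep_subset _ _

theorem isClosed_truncatedBody (hK : IsClosed K) (t : ℝ) : IsClosed (truncatedBody K ω t) := by
  have : truncatedBody K ω t = K ∩ ⋂ u ∈ ω, {x | ⟪x, u⟫ ≤ suppFn K u - t} := by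
    ext; simp [truncatedBody]
  rw [this]
  exact hK.inter (isClosed_biInter fun u _ => isClosed_le (by fun_prop) continuous_const)

theorem measurableSet_shellCone (hK : IsClosed K) (hg : Continuous (gauge K)) (t : ℝ) :
    MeasurableSet (shellCone K ω t) := by
  have : shellCone K ω t = K ∩ ⋃ u ∈ ω, {x | gauge K x * (suppFn K u - t) < ⟪x, u⟫} := by
    ext; simp [shellCone]
  rw [this]
  exact hK.measurableSet.inter
    (isOpen_biUnion fun u _ => isOpen_lt (by fun_prop) (by fun_prop)).measurableSet

theorem shellCone_mono {t t' : ℝ} (htt' : t ≤ t') : shellCone K ω t ⊆ shellCone K ω t' :=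
  fun x ⟨hxK, u, hu, hxu⟩ =>
    ⟨hxK, u, hu, (mul_le_mul_of_nonneg_left (by linarith) (gauge_nonneg x)).trans_lt hxu⟩

theorem diff_truncatedBody_subset_shellCone {t : ℝ} (ht : ∀ u ∈ ω, t ≤ suppFn K u) :
    K \ truncatedBody K ω t ⊆ shellCone K ω t := by
  rintro x ⟨hxK, hxt⟩
  obtain ⟨u, hu, hxu⟩ : ∃ u ∈ ω, suppFn K u - t < ⟪x, u⟫ := by
    by_contra! h
    exact hxt ⟨hxK, h⟩
  exact ⟨hxK, u, hu,
    (mul_le_of_le_one_left (sub_nonneg.mpr (ht u hu)) (gauge_le_one_of_mem hxK)).trans_lt hxu⟩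

theorem smul_shellCone_subset (hK : Convex ℝ K) (h0 : 0 ∈ K) {c : ℝ} (hc0 : 0 < c)
    (hc1 : c ≤ 1) (t : ℝ) : c • shellCone K ω t ⊆ shellCone K ω t := by
  rintro _ ⟨x, ⟨hxK, u, hu, hxu⟩, rfl⟩
  refine ⟨hK.smul_mem_of_zero_mem h0 hxK ⟨hc0.le, hc1⟩, u, hu, ?_⟩
  rw [gauge_smul_of_nonneg hc0.le, smul_eq_mul, real_inner_smul_left, mul_assoc]
  exact mul_lt_mul_of_pos_left hxu hc0

theorem disjoint_diff_truncatedBody_smul (hK : IsCompact K) {c t : ℝ} (hc : 0 ≤ c)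
    (hct : ∀ u ∈ ω, c * suppFn K u ≤ suppFn K u - t) :
    Disjoint (K \ truncatedBody K ω t) (c • K) := by
  rw [Set.disjoint_left]
  rintro _ ⟨hxK, hxt⟩ ⟨y, hy, rfl⟩
  refine hxt ⟨hxK, fun u hu => ?_⟩
  rw [real_inner_smul_left]
  exact (mul_le_mul_of_nonneg_left (le_suppFn hK hy u) hc).trans (hct u hu)

theorem volume_real_sub_truncatedBody_le (hK : IsCompact K) (hKconv : Convex ℝ K) (h0 : 0 ∈ K)
    {r t : ℝ} (hr : ∀ u ∈ ω, r ≤ suppFn K u) (ht : 0 < t) (htr : t < r) :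
    volume.real K - volume.real (truncatedBody K ω t) ≤
      n * t / r * volume.real (shellCone K ω t) := by
  have hr0 : 0 < r := ht.trans htr
  set c := 1 - t / r
  have htr' : t / r < 1 := (div_lt_one hr0).mpr htr
  have hc0 : 0 < c := by linarith
  have hc1 : c ≤ 1 := by linarith [div_pos ht hr0]
  have hct : ∀ u ∈ ω, c * suppFn K u ≤ suppFn K u - t := fun u hu => by
    have : t ≤ t / r * suppFn K u := by
      rw [div_mul_eq_mul_div, le_div_iff₀ hr0]; nlinarith [hr u hu]
    linarith
  have hshell : volume.real (K \ truncatedBody K ω t) ≤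
      (1 - c ^ n) * volume.real (shellCone K ω t) := by
    simpa only [finrank_euclideanSpace_fin] using addHaar_real_le_one_sub_pow_mul volume hc0.le
      (hK.isClosed.measurableSet.diff (isClosed_truncatedBody hK.isClosed t).measurableSet)
      (diff_truncatedBody_subset_shellCone fun u hu => htr.le.trans (hr u hu))
      (smul_shellCone_subset hKconv h0 hc0 hc1 t)
      ((disjoint_diff_truncatedBody_smul hK hc0.le hct).mono_right
        (smul_set_mono (shellCone_subset t)))
      (measure_mono (shellCone_subset t) |>.trans_lt hK.measure_lt_top).ne
  have hbernoulli : 1 - c ^ n ≤ n * t / r := by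
    have := one_add_mul_sub_le_pow (show (-1 : ℝ) ≤ c by linarith) n
    rw [mul_div_assoc]
    linarith
  rw [← measureReal_sdiff (truncatedBody_subset t)
    (isClosed_truncatedBody hK.isClosed t).measurableSet hK.measure_lt_top.ne]
  exact hshell.trans (mul_le_mul_of_nonneg_right hbernoulli measureReal_nonneg)

theorem exists_gauge_mul_suppFn_le_of_mem_biInter_shellCone (hK : IsCompact K)
    (hω : IsCompact ω) {x : EuclideanSpace ℝ (Fin n)} (hx : x ∈ ⋂ t > 0, shellCone K ω t) :
    ∃ u ∈ ω, gauge K x * suppFn K u ≤ ⟪x, u⟫ := by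
  simp only [mem_iInter] at hx
  obtain ⟨-, u₁, hu₁, -⟩ := hx 1 one_pos
  obtain ⟨u, hu, hmax⟩ := hω.exists_isMaxOn ⟨u₁, hu₁⟩
    (f := fun u => ⟪x, u⟫ - gauge K x * suppFn K u)
    (by have := continuous_suppFn hK; fun_prop)
  refine ⟨u, hu, sub_nonneg.mp (le_of_forall_pos_lt_add fun ε hε => ?_)⟩
  have hg : 0 ≤ gauge K x := gauge_nonneg x
  obtain ⟨-, v, hv, hxv⟩ := hx (ε / (gauge K x + 1)) (by positivity)
  have hgε : gauge K x * (ε / (gauge K x + 1)) < ε := by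
    rw [mul_div_assoc', div_lt_iff₀ (by positivity)]
    nlinarith
  have : ⟪x, v⟫ - gauge K x * suppFn K v ≤ ⟪x, u⟫ - gauge K x * suppFn K u := hmax hv
  linarith

theorem biInter_shellCone_subset (hK : IsCompact K) (hKconv : Convex ℝ K) (hK0 : K ∈ 𝓝 0)
    (hω : IsCompact ω) : ⋂ t > 0, shellCone K ω t ⊆
      ⋃ s ∈ Icc (0 : ℝ) 1, s • {x ∈ frontier K | ∃ u ∈ ω, ∀ y ∈ K, ⟪y, u⟫ ≤ ⟪x, u⟫} := by
  intro x hx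
  obtain ⟨u, hu, hxu⟩ := exists_gauge_mul_suppFn_le_of_mem_biInter_shellCone hK hω hx
  obtain ⟨hxK, v, -, hxv⟩ := mem_iInter₂.mp hx 1 one_pos
  have hx0 : x ≠ 0 := by
    rintro rfl
    simp at hxv
  set g := gauge K x
  have hg : 0 < g := (gauge_pos (absorbent_nhds_zero hK0)
    ((NormedSpace.isVonNBounded_iff ℝ).mpr hK.isBounded)).mpr hx0
  have hgp : gauge K (g⁻¹ • x) = 1 := by
    rw [gauge_smul_of_nonneg (inv_nonneg.mpr hg.le), smul_eq_mul, inv_mul_cancel₀ hg.ne']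
  have hpK : g⁻¹ • x ∈ K := by
    simpa [hK.isClosed.closure_eq] using (gauge_le_one_iff_mem_closure hKconv hK0).mp hgp.le
  refine mem_biUnion ⟨gauge_nonneg x, gauge_le_one_of_mem hxK⟩
    ⟨g⁻¹ • x, ⟨?_, u, hu, fun y hy => ?_⟩, smul_inv_smul₀ hg.ne' x⟩
  · rw [hK.isClosed.frontier_eq]
    exact ⟨hpK, fun hint => (interior_subset_gauge_lt_one K hint).ne hgp⟩
  · rw [real_inner_smul_left, le_inv_mul_iff₀ hg]
    exact (mul_le_mul_of_nonneg_left (le_suppFn hK hy u) hg.le).trans hxu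

theorem tendsto_volume_shellCone (hK : IsCompact K) (hKconv : Convex ℝ K) (hK0 : K ∈ 𝓝 0)
    (hω : IsCompact ω)
    (hSK : μH[(n : ℝ) - 1] {x ∈ frontier K | ∃ u ∈ ω, ∀ y ∈ K, ⟪y, u⟫ ≤ ⟪x, u⟫} = 0) :
    Tendsto (fun t => volume (shellCone K ω t)) (𝓝[>] 0) (𝓝 0) := by
  have hnull : volume (⋂ t > 0, shellCone K ω t) = 0 :=
    measure_mono_null (biInter_shellCone_subset hK hKconv hK0 hω)
      (addHaar_cone_eq_zero volume
        (hK.isBounded.subset ((sep_subset _ _).trans hK.isClosed.frontier_subset))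
        (by rwa [finrank_euclideanSpace_fin]))
  rw [← hnull]
  have hmeas t := measurableSet_shellCone (ω := ω) hK.isClosed (continuous_gauge hKconv hK0) t
  exact tendsto_measure_biInter_gt (fun t _ => (hmeas t).nullMeasurableSet)
    (fun _ _ _ h => shellCone_mono h)
    ⟨1, one_pos, (measure_mono (shellCone_subset 1) |>.trans_lt hK.measure_lt_top).ne⟩

end ConvexBody

theorem stmt_15_general (n : ℕ) (K : Set (EuclideanSpace ℝ (Fin n)))
    (hKcomp : IsCompact K) (hKconv : Convex ℝ K)
    (r : ℝ) (hr : 0 < r)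
    (hball : Metric.closedBall (0 : EuclideanSpace ℝ (Fin n)) r ⊆ interior K)
    (ω : Set (EuclideanSpace ℝ (Fin n))) (hω : IsClosed ω)
    (hωs : ω ⊆ Metric.sphere (0 : EuclideanSpace ℝ (Fin n)) 1)
    -- the surface area measure of `K` vanishes on `ω`
    (hSK : μH[(n:ℝ)-1] {x ∈ frontier K | ∃ u ∈ ω, ∀ y ∈ K, ⟪y, u⟫ ≤ ⟪x, u⟫} = 0) :
    Filter.Tendsto
      (fun t : ℝ =>
        ((MeasureTheory.volume {x ∈ K | ∀ u ∈ ω, ⟪x, u⟫ ≤ suppFn K u - t}).toReal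
          - (MeasureTheory.volume K).toReal) / t)
      (𝓝[>] (0:ℝ)) (𝓝 0) := by
  have hK0 : K ∈ 𝓝 0 := mem_interior_iff_mem_nhds.mp (hball (mem_closedBall_self hr.le))
  have hωc : IsCompact ω := (isCompact_sphere 0 1).of_isClosed_subset hω hωs
  have hrh : ∀ u ∈ ω, r ≤ suppFn K u := fun u hu =>
    le_suppFn_of_closedBall_subset hKcomp hr.le (hball.trans interior_subset)
      (by simpa using hωs hu)
  have hlim : Tendsto (fun t => -(n / r) * volume.real (shellCone K ω t)) (𝓝[>] 0) (𝓝 0) := by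
    have := ((ENNReal.tendsto_toReal ENNReal.zero_ne_top).comp
      (tendsto_volume_shellCone hKcomp hKconv hK0 hωc hSK)).const_mul (-(n / r))
    rwa [ENNReal.toReal_zero, mul_zero] at this
  refine tendsto_of_tendsto_of_tendsto_of_le_of_le' hlim tendsto_const_nhds ?_ ?_
  · filter_upwards [Ioo_mem_nhdsGT hr] with t ⟨ht, htr⟩
    show _ ≤ (volume.real (truncatedBody K ω t) - volume.real K) / t
    rw [le_div_iff₀ ht]
    calc -(n / r) * volume.real (shellCone K ω t) * t
        = -(n * t / r * volume.real (shellCone K ω t)) := by ring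
      _ ≤ _ := by
        linarith [volume_real_sub_truncatedBody_le hKcomp hKconv (mem_of_mem_nhds hK0) hrh ht htr]
  · filter_upwards [self_mem_nhdsWithin] with t (ht : 0 < t)
    exact div_nonpos_of_nonpos_of_nonneg
      (sub_nonpos.mpr (measureReal_mono (truncatedBody_subset t) hKcomp.measure_lt_top.ne)) ht.le

theorem stmt_15 (n : ℕ) (hn : 1 ≤ n) (K : Set (EuclideanSpace ℝ (Fin n)))
    (hKcomp : IsCompact K) (hKconv : Convex ℝ K)
    (r : ℝ) (hr : 0 < r)
    (hball : Metric.closedBall (0 : EuclideanSpace ℝ (Fin n)) r ⊆ interior K)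
    (ω : Set (EuclideanSpace ℝ (Fin n))) (hω : IsClosed ω)
    (hωs : ω ⊆ Metric.sphere (0 : EuclideanSpace ℝ (Fin n)) 1)
    -- the surface area measure of `K` vanishes on `ω`
    (hSK : μH[(n:ℝ)-1] {x ∈ frontier K | ∃ u ∈ ω, ∀ y ∈ K, ⟪y, u⟫ ≤ ⟪x, u⟫} = 0) :
    Filter.Tendsto
      (fun t : ℝ =>
        ((MeasureTheory.volume {x ∈ K | ∀ u ∈ ω, ⟪x, u⟫ ≤ suppFn K u - t}).toReal
          - (MeasureTheory.volume K).toReal) / t)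
      (𝓝[>] (0:ℝ)) (𝓝 0) :=
  stmt_15_general n K hKcomp hKconv r hr hball ω hω hωs hSK
end

section
/- Let K be a convex body in ℝⁿ, σ = ϱ w with ϱ ≥ 0 and w ∈ S^{n-1}, and suppose σ + r₀ B^n ⊆ K for some r₀ > 0. Let Ξ = ∂K ∩ (σ + r₀ B^♯ + (0,∞)w), where B^♯ = w^⊥ ∩ int B^n. Then every exterior unit normal u of K at a point of Ξ satisfies ⟨u, w⟩ ≥ 0, and consequently S_K(Ω(w, π/2)) ≥ r₀^{n-1} κ_{n-1}, where Ω(w, π/2) = {u ∈ S^{n-1} : ⟨u,w⟩ ≥ 0}. -/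
open MeasureTheory Set Metric
open scoped RealInnerProductSpace

/-! A point `ϱ • w + y` with `y ⊥ w` and `‖y‖ < r₀` is interior to `K`, so a linear functional `u`
maximised on `K` at a boundary point `ϱ • w + y + s • w` (`s > 0`) is strictly smaller at
`ϱ • w + y`; hence `s ⟪u, w⟫ > 0`. As `K` is bounded, every such vertical ray leaves `K` through
its boundary, so the orthogonal projection onto `w^⊥` maps `Ξ` onto a set containing the open
`(n-1)`-ball of radius `r₀`. The projection is 1-Lipschitz, hence does not increase `μH[n-1]`,
and on `ℝ^{n-1}` Lebesgue measure is bounded by the unnormalised `μH[n-1]`. -/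

theorem EuclideanSpace.volume_le_hausdorffMeasure {ι : Type*} [Fintype ι]
    (s : Set (EuclideanSpace ℝ ι)) : volume s ≤ μH[Fintype.card ι] s := by
  have himage : WithLp.ofLp '' s = WithLp.toLp 2 ⁻¹' s :=
    congrFun (image_eq_preimage_of_inverse (f := WithLp.ofLp) (g := WithLp.toLp 2)
      (fun _ => rfl) (fun _ => rfl)) s
  calc volume s = volume (WithLp.ofLp '' s) := by
        rw [himage]
        exact ((EuclideanSpace.volume_preserving_symm_measurableEquiv_toLp ι).symm
          |>.measure_preimage_equiv s).symm
    _ = μH[Fintype.card ι] (WithLp.ofLp '' s) := by rw [hausdorffMeasure_pi_real]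
    _ ≤ μH[Fintype.card ι] s := by
        simpa only [ENNReal.coe_one, ENNReal.one_rpow, one_mul] using
          (PiLp.lipschitzWith_ofLp 2 (fun _ : ι => ℝ)).hausdorffMeasure_image_le
            (Nat.cast_nonneg (Fintype.card ι)) s

theorem LipschitzWith.volume_le_hausdorffMeasure_of_subset_image {X ι : Type*} [EMetricSpace X]
    [MeasurableSpace X] [BorelSpace X] [Fintype ι] {f : X → EuclideanSpace ℝ ι}
    (hf : LipschitzWith 1 f) {S : Set X} {T : Set (EuclideanSpace ℝ ι)} (hT : T ⊆ f '' S) :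
    volume T ≤ μH[Fintype.card ι] S :=
  calc volume T ≤ μH[Fintype.card ι] T := EuclideanSpace.volume_le_hausdorffMeasure T
    _ ≤ μH[Fintype.card ι] (f '' S) := measure_mono hT
    _ ≤ μH[Fintype.card ι] S := by simpa using hf.hausdorffMeasure_image_le (Nat.cast_nonneg _) S

theorem MeasureTheory.Measure.addHaar_ball_eq_ofReal_mul_unitClosedBall {E : Type*}
    [NormedAddCommGroup E] [NormedSpace ℝ E] [MeasurableSpace E] [BorelSpace E]
    [FiniteDimensional ℝ E] (μ : Measure E) [μ.IsAddHaarMeasure] {r : ℝ} (hr : 0 < r) :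
    μ (ball 0 r) = ENNReal.ofReal (r ^ Module.finrank ℝ E * (μ (closedBall 0 1)).toReal) := by
  rw [ENNReal.ofReal_mul (by positivity), ENNReal.ofReal_toReal measure_closedBall_lt_top.ne,
    Measure.addHaar_ball_of_pos μ 0 hr, Measure.addHaar_unitClosedBall_eq_addHaar_unitBall]

section Support

variable {E : Type*} [NormedAddCommGroup E] [InnerProductSpace ℝ E]

theorem inner_lt_of_mem_interior_of_forall_inner_le {K : Set E} {a u : E} {h : ℝ}
    (ha : a ∈ interior K) (hu : u ≠ 0) (hK : ∀ z ∈ K, ⟪z, u⟫ ≤ h) : ⟪a, u⟫ < h := by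
  obtain ⟨ε, hε, hball⟩ := Metric.isOpen_iff.mp isOpen_interior a ha
  have hu' : 0 < ‖u‖ := norm_pos_iff.mpr hu
  set z := a + (ε / 2 / ‖u‖) • u
  have hz : z ∈ K := by
    refine interior_subset (hball ?_)
    rw [mem_ball, dist_eq_norm, add_sub_cancel_left, norm_smul,
      Real.norm_of_nonneg (by positivity), div_mul_cancel₀ _ hu'.ne']
    linarith
  have hzu : ⟪z, u⟫ = ⟪a, u⟫ + ε / 2 * ‖u‖ := by
    rw [inner_add_left, real_inner_smul_left, real_inner_self_eq_norm_sq]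
    field_simp
  nlinarith [hK z hz]

theorem inner_pos_of_forall_inner_le_add_smul {K : Set E} {a u w : E} {s : ℝ}
    (ha : a ∈ interior K) (hu : u ≠ 0) (hs : 0 < s) (hK : ∀ z ∈ K, ⟪z, u⟫ ≤ ⟪a + s • w, u⟫) :
    0 < ⟪u, w⟫ := by
  have h := inner_lt_of_mem_interior_of_forall_inner_le ha hu hK
  rw [inner_add_left, real_inner_smul_left] at h
  rw [real_inner_comm]
  exact pos_of_mul_pos_right (by linarith) hs.le

theorem Convex.exists_unit_normal_of_notMem_interior [CompleteSpace E] {K : Set E} {x : E}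
    (hK : Convex ℝ K) (hKint : (interior K).Nonempty) (hx : x ∉ interior K) :
    ∃ u : E, ‖u‖ = 1 ∧ ∀ z ∈ K, ⟪z, u⟫ ≤ ⟪x, u⟫ := by
  obtain ⟨f, hf0, hf⟩ := geometric_hahn_banach_of_nonempty_interior_point hK hx hKint
  set v := (InnerProductSpace.toDual ℝ E).symm f
  have hv : v ≠ 0 := by simpa [v] using hf0
  have hfv : ∀ y, ⟪y, v⟫ = f y := fun y => by
    rw [real_inner_comm]; exact InnerProductSpace.toDual_symm_apply
  refine ⟨‖v‖⁻¹ • v, by simp [norm_smul, hv], fun z hz => ?_⟩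
  rw [real_inner_smul_right, real_inner_smul_right, hfv, hfv]
  exact mul_le_mul_of_nonneg_left (hf z hz) (by positivity)

end Support

theorem Bornology.IsBounded.exists_pos_add_smul_mem_frontier {E : Type*} [NormedAddCommGroup E]
    [NormedSpace ℝ E] {K : Set E} (hK : Bornology.IsBounded K) {a w : E} (ha : a ∈ interior K)
    (hw : w ≠ 0) : ∃ t > (0 : ℝ), a + t • w ∈ frontier K := by
  set ray := (fun t : ℝ => a + t • w) '' Ici 0
  have hray : IsPreconnected ray := isPreconnected_Ici.image _ (by fun_prop)
  obtain ⟨R, hR, hKR⟩ := hK.subset_closedBall_lt 0 a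
  have hout : a + ((R + 1) / ‖w‖) • w ∉ K := fun h => by
    have := hKR h
    rw [mem_closedBall, dist_eq_norm, add_sub_cancel_left, norm_smul,
      Real.norm_of_nonneg (by positivity), div_mul_cancel₀ _ (norm_ne_zero_iff.mpr hw)] at this
    linarith
  obtain ⟨_, ⟨t, ht, rfl⟩, hfr⟩ : (ray ∩ frontier K).Nonempty := by
    by_contra! hempty
    have hsub : ray ⊆ interior K ∪ (closure K)ᶜ := fun p hp => by
      by_contra hp'
      simp only [mem_union, mem_compl_iff, not_or, not_not] at hp'
      exact hempty.subset ⟨hp, hp'.2, hp'.1⟩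
    have := hray.subset_left_of_subset_union isOpen_interior isClosed_closure.isOpen_compl
      (disjoint_compl_right.mono_left interior_subset_closure) hsub
      ⟨a, ⟨0, self_mem_Ici, by simp⟩, ha⟩
    exact hout (interior_subset (this ⟨_, mem_Ici.mpr (by positivity), rfl⟩))
  refine ⟨t, lt_of_le_of_ne ht ?_, hfr⟩
  rintro rfl
  simp only [zero_smul, add_zero] at hfr
  exact hfr.2 ha

theorem Convex.exists_add_smul_mem_frontier_with_normal {E : Type*} [NormedAddCommGroup E]
    [InnerProductSpace ℝ E] [CompleteSpace E] {K : Set E} (hK : Convex ℝ K)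
    (hKb : Bornology.IsBounded K) {a w : E} (ha : a ∈ interior K) (hw : w ≠ 0) :
    ∃ s > (0 : ℝ), a + s • w ∈ frontier K ∧
      ∃ u : E, ‖u‖ = 1 ∧ 0 < ⟪u, w⟫ ∧ ∀ z ∈ K, ⟪z, u⟫ ≤ ⟪a + s • w, u⟫ := by
  obtain ⟨s, hs, hfr⟩ := hKb.exists_pos_add_smul_mem_frontier ha hw
  obtain ⟨u, hu, hsupp⟩ := hK.exists_unit_normal_of_notMem_interior ⟨a, ha⟩ hfr.2
  exact ⟨s, hs, hfr, u, hu,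
    inner_pos_of_forall_inner_le_add_smul ha (norm_ne_zero_iff.mp (hu ▸ one_ne_zero)) hs hsupp,
    hsupp⟩

theorem stmt_18_general (n : ℕ) (hn : 1 ≤ n) (K : Set (EuclideanSpace ℝ (Fin n)))
    (hKcomp : IsCompact K) (hKconv : Convex ℝ K)
    (r₀ ϱ : ℝ) (hr₀ : 0 < r₀)
    (w : EuclideanSpace ℝ (Fin n)) (hw : ‖w‖ = 1)
    (hball : Metric.closedBall (ϱ • w) r₀ ⊆ K) :
    -- all exterior unit normals along `Ξ` lie in the closed hemisphere around `w` …
    (∀ x ∈ frontier K,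
      (∃ y : EuclideanSpace ℝ (Fin n), ⟪y, w⟫ = 0 ∧ ‖y‖ < r₀ ∧
        ∃ s > (0:ℝ), x = ϱ • w + y + s • w) →
      ∀ u : EuclideanSpace ℝ (Fin n), ‖u‖ = 1 → (∀ z ∈ K, ⟪z, u⟫ ≤ ⟪x, u⟫) →
        0 ≤ ⟪u, w⟫) ∧
    -- … and consequently the surface area measure of the hemisphere is at least r₀^{n-1} κ_{n-1}
    μH[(n:ℝ)-1] {x ∈ frontier K |
        ∃ u : EuclideanSpace ℝ (Fin n), ‖u‖ = 1 ∧ 0 ≤ ⟪u, w⟫ ∧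
          ∀ z ∈ K, ⟪z, u⟫ ≤ ⟪x, u⟫}
      ≥ ENNReal.ofReal (r₀ ^ (n - 1) *
          (MeasureTheory.volume (Metric.closedBall (0 : EuclideanSpace ℝ (Fin (n-1))) 1)).toReal) := by
  have hw0 : w ≠ 0 := norm_ne_zero_iff.mp (hw ▸ one_ne_zero)
  have hinterior : ∀ y, ‖y‖ < r₀ → ϱ • w + y ∈ interior K := fun y hy =>
    interior_maximal (ball_subset_closedBall.trans hball) isOpen_ball
      (by rwa [mem_ball, dist_eq_norm, add_sub_cancel_left])
  refine ⟨?_, ?_⟩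
  · rintro x - ⟨y, -, hy, s, hs, rfl⟩ u hu hsupp
    exact (inner_pos_of_forall_inner_le_add_smul (hinterior y hy)
      (norm_ne_zero_iff.mp (hu ▸ one_ne_zero)) hs hsupp).le
  have : Fact (Module.finrank ℝ (EuclideanSpace ℝ (Fin n)) = (n - 1) + 1) :=
    ⟨by rw [finrank_euclideanSpace_fin]; omega⟩
  set b := OrthonormalBasis.fromOrthogonalSpanSingleton (𝕜 := ℝ) (n - 1) hw0
  set q := b.repr.toContinuousLinearEquiv.toContinuousLinearMap ∘L
    (ℝ ∙ w)ᗮ.orthogonalProjectionOnto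
  have hq : LipschitzWith 1 q := by
    have h := b.repr.lipschitz.comp (ℝ ∙ w)ᗮ.lipschitzWith_orthogonalProjectionOnto
    rw [mul_one] at h
    exact h
  calc _ = volume (ball (0 : EuclideanSpace ℝ (Fin (n - 1))) r₀) := by
        simpa using (volume.addHaar_ball_eq_ofReal_mul_unitClosedBall
          (E := EuclideanSpace ℝ (Fin (n - 1))) hr₀).symm
    _ ≤ μH[Fintype.card (Fin (n - 1))] _ :=
        hq.volume_le_hausdorffMeasure_of_subset_image fun a ha => ?_
    _ = _ := by rw [Fintype.card_fin, Nat.cast_sub hn, Nat.cast_one]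
  set y := b.repr.symm a
  have hy : ‖(y : EuclideanSpace ℝ (Fin n))‖ < r₀ := by
    rwa [← Submodule.coe_norm, b.repr.symm.norm_map, ← mem_ball_zero_iff]
  obtain ⟨s, hs, hfr, u, hu, huw, hsupp⟩ :=
    hKconv.exists_add_smul_mem_frontier_with_normal hKcomp.isBounded (hinterior y hy) hw0
  refine ⟨_, ⟨hfr, u, hu, huw.le, hsupp⟩, ?_⟩
  have : ϱ • w + (y : EuclideanSpace ℝ (Fin n)) + s • w = (ϱ + s) • w + y := by module
  simp [q, this, Submodule.orthogonalProjectionOnto_orthogonalComplement_singleton_eq_zero, y]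

theorem stmt_18 (n : ℕ) (hn : 1 ≤ n) (K : Set (EuclideanSpace ℝ (Fin n)))
    (hKcomp : IsCompact K) (hKconv : Convex ℝ K)
    (r₀ ϱ : ℝ) (hr₀ : 0 < r₀) (hϱ : 0 ≤ ϱ)
    (w : EuclideanSpace ℝ (Fin n)) (hw : ‖w‖ = 1)
    (hball : Metric.closedBall (ϱ • w) r₀ ⊆ K) :
    -- all exterior unit normals along `Ξ` lie in the closed hemisphere around `w` …
    (∀ x ∈ frontier K,
      (∃ y : EuclideanSpace ℝ (Fin n), ⟪y, w⟫ = 0 ∧ ‖y‖ < r₀ ∧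
        ∃ s > (0:ℝ), x = ϱ • w + y + s • w) →
      ∀ u : EuclideanSpace ℝ (Fin n), ‖u‖ = 1 → (∀ z ∈ K, ⟪z, u⟫ ≤ ⟪x, u⟫) →
        0 ≤ ⟪u, w⟫) ∧
    -- … and consequently the surface area measure of the hemisphere is at least r₀^{n-1} κ_{n-1}
    μH[(n:ℝ)-1] {x ∈ frontier K |
        ∃ u : EuclideanSpace ℝ (Fin n), ‖u‖ = 1 ∧ 0 ≤ ⟪u, w⟫ ∧
          ∀ z ∈ K, ⟪z, u⟫ ≤ ⟪x, u⟫}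
      ≥ ENNReal.ofReal (r₀ ^ (n - 1) *
          (MeasureTheory.volume (Metric.closedBall (0 : EuclideanSpace ℝ (Fin (n-1))) 1)).toReal) :=
  stmt_18_general n hn K hKcomp hKconv r₀ ϱ hr₀ w hw hball
end
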